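/- Let G be a simple graph, let H be a shortest hole of G, and let v_1, v_2, v_3 be three consecutive vertices of H. Let G' be the graph obtained from G by deleting all vertices of N[v_2] ∖ {v_1, v_3} other than v_1 and v_3 (in particular, v_2 is deleted). Then the minimum length of a v_1–v_3 path in G' equals |V(H)| − 2, and for any shortest v_1–v_3 path P in G', the cycle obtained from P by appending v_2 (adjacent to both v_1 and v_3) is a hole of G of length |V(H)|. -/

import Mathlib

/-
Removing `v₂` from a shortest hole `H` leaves a `v₁v₃`-path of length `|H| - 2` that avoids the
rest of `N[v₂]`, so the distance from `v₁` to `v₃` in `G'` is at most `|H| - 2`. Conversely, a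
shortest `v₁v₃`-path `P` of `G'` is chordless, `v₂` sees only its ends, and `v₁v₃` is not an edge
(it would be a chord of `H`), so `P` has length at least `2` and closing it up through `v₂` gives a
hole of length `|P| + 2`; minimality of `H` then forces `|P| = |H| - 2`.
-/

open SimpleGraph

variable {V : Type*}

def IsHole (G : SimpleGraph V) {v : V} (c : G.Walk v v) : Prop :=
  c.IsCycle ∧ 4 ≤ c.length ∧
    ∀ x y : V, x ∈ c.support → y ∈ c.support → G.Adj x y → c.toSubgraph.Adj x y

def ChordalGraph (G : SimpleGraph V) : Prop :=
  ∀ (v : V) (c : G.Walk v v), ¬ IsHole G c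

/-- The paper's `N(X)`. -/
def extNbhd (G : SimpleGraph V) (X : Set V) : Set V :=
  {v | v ∉ X ∧ ∃ x ∈ X, G.Adj v x}

namespace SimpleGraph.Walk

variable {G : SimpleGraph V} {u v w x y : V}

lemma exists_length_lt_of_adj_mem_support (p : G.Walk v w) (hy : y ∈ p.support) (hyv : y ≠ v)
    (h : G.Adj u y) : ∃ q : G.Walk u w, q.length < p.length + 1 := by
  classical
  exact ⟨cons h (p.dropUntil y hy), by simpa using length_dropUntil_lt_length hy hyv⟩

lemma exists_length_lt_of_isChord (p : G.Walk u v) (hc : p.IsChord s(x, y)) :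
    ∃ q : G.Walk u v, q.length < p.length := by
  obtain ⟨hxy, he, hx, hy⟩ := isChord_sym2Mk.mp hc
  clear hc
  induction p with
  | nil => simp_all
  | @cons u c v h q ih =>
    simp only [support_cons, List.mem_cons, edges_cons, not_or] at hx hy he
    rcases hx with rfl | hx <;> rcases hy with rfl | hy
    · exact absurd hxy G.irrefl
    · exact exists_length_lt_of_adj_mem_support q hy (by rintro rfl; exact he.1 rfl) hxy
    · exact exists_length_lt_of_adj_mem_support q hx (by rintro rfl; exact he.1 Sym2.eq_swap)
        hxy.symm
    · obtain ⟨q', hq'⟩ := ih he.2 hx hy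
      exact ⟨cons h q', by simpa using hq'⟩

lemma isChordless_of_length_eq_dist {p : G.Walk u v} (hp : p.length = G.dist u v) :
    p.IsChordless := by
  intro e he
  induction e using Sym2.ind
  obtain ⟨q, hq⟩ := p.exists_length_lt_of_isChord he
  have := G.dist_le q
  omega

lemma IsChordless.map {W : Type*} {G' : SimpleGraph W} {p : G.Walk u v} (hp : p.IsChordless)
    (f : G ↪g G') :
    (p.map f.toHom).IsChordless := by
  rw [isChordless_iff_forall_mem_edges] at hp ⊢
  intro x' y' hx' hy' hadj
  simp only [support_map, List.mem_map] at hx' hy'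
  obtain ⟨x, hx, rfl⟩ := hx'
  obtain ⟨y, hy, rfl⟩ := hy'
  rw [edges_map]
  exact List.mem_map_of_mem (f := Sym2.map f) (hp hx hy (f.map_adj_iff.mp hadj))

lemma IsPath.not_adj_of_isChordless {p : G.Walk u v} (hp : p.IsPath) (hc : p.IsChordless)
    (hlen : 2 ≤ p.length) : ¬G.Adj u v := fun h => by
  have := hp.length_eq_one_of_mem_edges (hc.mem_edges p.start_mem_support p.end_mem_support h)
  omega

lemma length_cons_concat {a b : V} (r : G.Walk a b) (h₁ : G.Adj u a) (h₂ : G.Adj b u) :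
    (cons h₁ (r.concat h₂)).length = r.length + 2 := by
  simp [length_concat]

lemma exists_eq_cons_concat (p : G.Walk u v) (hp : 2 ≤ p.length) :
    ∃ (x y : V) (h₁ : G.Adj u x) (r : G.Walk x y) (h₂ : G.Adj y v), p = cons h₁ (r.concat h₂) := by
  cases p with
  | nil => simp at hp
  | cons h q =>
    have hq : ¬q.Nil := by rw [← length_eq_zero_iff]; simp at hp; omega
    exact ⟨_, _, h, q.dropLast, q.adj_penultimate hq, by rw [concat_dropLast]⟩

end SimpleGraph.Walk

open SimpleGraph.Walk

variable {G : SimpleGraph V} {v a b : V}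

lemma isHole_cons_concat_iff {r : G.Walk a b} (h₁ : G.Adj v a) (h₂ : G.Adj b v) :
    IsHole G (cons h₁ (r.concat h₂)) ↔ r.IsPath ∧ r.IsChordless ∧ 2 ≤ r.length ∧
      v ∉ r.support ∧ ∀ x ∈ r.support, G.Adj v x → x = a ∨ x = b := by
  have hsupp : ∀ x, x ∈ (cons h₁ (r.concat h₂)).support ↔ x = v ∨ x ∈ r.support := by
    simp [support_concat]; tauto
  have hedges : (cons h₁ (r.concat h₂)).edges = s(v, a) :: (r.edges ++ [s(b, v)]) := by
    simp [edges_concat]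
  simp only [IsHole, cons_isCycle_iff, concat_isPath_iff, length_cons, length_concat, hsupp,
    adj_toSubgraph_iff_mem_edges, hedges, edges_concat, isChordless_iff_forall_mem_edges]
  constructor
  · rintro ⟨⟨⟨hr, hv⟩, -⟩, hlen, hind⟩
    refine ⟨hr, fun x y hx hy hxy => ?_, by omega, hv, fun x hx hadj => ?_⟩
    · have hx' : x ≠ v := by rintro rfl; exact hv hx
      have hy' : y ≠ v := by rintro rfl; exact hv hy
      simpa [hx', hy'] using hind x y (.inr hx) (.inr hy) hxy
    · have := hind v x (.inl rfl) (.inr hx) hadj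
      grind [r.fst_mem_support_of_mem_edges]
  · rintro ⟨hr, hc, hlen, hv, hN⟩
    have hab : a ≠ b := by
      rintro rfl
      simp [(isPath_iff_nil.mp hr).length_eq_zero] at hlen
    refine ⟨⟨⟨hr, hv⟩, ?_⟩, by omega, ?_⟩
    · grind [r.fst_mem_support_of_mem_edges, h₂.ne]
    · rintro x y (rfl | hx) (rfl | hy) hxy
      · exact absurd hxy G.irrefl
      · rcases hN y hy hxy with rfl | rfl <;> simp
      · rcases hN x hx hxy.symm with rfl | rfl <;> simp [Sym2.eq_swap]
      · exact List.mem_cons_of_mem _ (List.mem_append_left _ (hc hx hy hxy))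

lemma IsHole.rotate [DecidableEq V] {u : V} {c : G.Walk u u} (hc : IsHole G c)
    (hv : v ∈ c.support) : IsHole G (c.rotate v hv) := by
  obtain ⟨hcyc, hlen, hind⟩ := hc
  refine ⟨hcyc.rotate hv, by simpa using hlen, fun x y hx hy hxy => ?_⟩
  rw [toSubgraph_rotate]
  exact hind x y ((mem_support_rotate_iff ..).mp hx) ((mem_support_rotate_iff ..).mp hy) hxy

lemma IsHole.reverse {u : V} {c : G.Walk u u} (hc : IsHole G c) : IsHole G c.reverse := by
  obtain ⟨hcyc, hlen, hind⟩ := hc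
  refine ⟨hcyc.reverse, by simpa using hlen, fun x y hx hy hxy => ?_⟩
  rw [toSubgraph_reverse]
  exact hind x y (by simpa using hx) (by simpa using hy) hxy

lemma IsHole.exists_cons_concat {u : V} {c : G.Walk u u} (hc : IsHole G c)
    (ha : c.toSubgraph.Adj a v) (hb : c.toSubgraph.Adj v b) (hab : a ≠ b)
    (h₁ : G.Adj v a) (h₂ : G.Adj b v) :
    ∃ r : G.Walk a b, IsHole G (cons h₁ (r.concat h₂)) ∧ r.length + 2 = c.length := by
  classical
  have hv : v ∈ c.support := mem_support_of_adj_toSubgraph hb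
  have hd := hc.rotate hv
  have hsub : (c.rotate v hv).toSubgraph = c.toSubgraph := toSubgraph_rotate c hv
  have hlen : (c.rotate v hv).length = c.length := length_rotate ..
  obtain ⟨x, y, h₁', r, h₂', hdr⟩ :=
    (c.rotate v hv).exists_eq_cons_concat (by have := hd.2.1; omega)
  have hnbr := hd.1.neighborSet_toSubgraph_endpoint
  rw [hsub] at hnbr
  have hnbr' : ∀ z, c.toSubgraph.Adj v z → z = x ∨ z = y := fun z hz => by
    have : z ∈ c.toSubgraph.neighborSet v := hz
    rwa [hnbr, hdr, snd_cons, penultimate_cons_of_not_nil _ _ (by simp [concat_eq_append]),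
      penultimate_concat] at this
  rw [hdr] at hd hlen
  rcases hnbr' a ha.symm with rfl | rfl <;> rcases hnbr' b hb with rfl | rfl
  · exact absurd rfl hab
  · exact ⟨r, hd, by simpa using hlen⟩
  · refine ⟨r.reverse, ?_, by simpa using hlen⟩
    have := hd.reverse
    rwa [reverse_cons, reverse_concat, ← concat_eq_append, concat_cons] at this
  · exact absurd rfl hab

lemma isHole_cons_concat_map_induce {s : Set V} (hvs : v ∉ s)
    (hN : ∀ x ∈ s, G.Adj v x → x = a ∨ x = b) (hab : a ≠ b) (hnab : ¬G.Adj a b)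
    (ha : a ∈ s) (hb : b ∈ s) (h₁ : G.Adj v a) (h₂ : G.Adj b v)
    {p : (G.induce s).Walk ⟨a, ha⟩ ⟨b, hb⟩} (hp : p.length = (G.induce s).dist ⟨a, ha⟩ ⟨b, hb⟩) :
    IsHole G (cons h₁ ((p.map (Embedding.induce s).toHom).concat h₂)) ∧
      (cons h₁ ((p.map (Embedding.induce s).toHom).concat h₂)).length = p.length + 2 := by
  have hsupp : ∀ x ∈ (p.map (Embedding.induce s).toHom).support, x ∈ s := by
    simp only [Walk.support_map, List.mem_map]
    rintro _ ⟨x, -, rfl⟩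
    exact x.2
  have hlen : 1 < p.length :=
    hp ▸ p.reachable.one_lt_dist_of_ne_of_not_adj (by simpa using hab) (by simpa using hnab)
  refine ⟨(isHole_cons_concat_iff (r := p.map (Embedding.induce s).toHom) h₁ h₂).mpr
    ⟨(p.isPath_of_length_eq_dist hp).map (Embedding.induce (G := G) s).injective,
      (isChordless_of_length_eq_dist hp).map (Embedding.induce s),
      (p.length_map _).symm ▸ hlen, fun h => hvs (hsupp v h), fun x hx => hN x (hsupp x hx)⟩,
    (length_cons_concat (p.map (Embedding.induce s).toHom) h₁ h₂).trans
      (congrArg (· + 2) (p.length_map _))⟩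

/-- Let `H` (the walk `c`) be a shortest hole of `G` and
`v₁, v₂, v₃` three consecutive vertices of `H`.  Let `G'` be obtained from `G` by
deleting all vertices of `N[v₂] \ {v₁, v₃}` (in particular `v₂` is deleted), i.e.
`G' = G.induce ((N[v₂] \ {v₁, v₃})ᶜ)`.  Then the minimum length of a `v₁`–`v₃`
path in `G'` equals `|V(H)| − 2`, and for any shortest `v₁`–`v₃` path `P` of `G'`,
the closed walk obtained from `P` by appending `v₂` is a hole of `G` of length
`|V(H)|`. -/
theorem stmt13 {V : Type*} (G : SimpleGraph V) {h₀ : V} (c : G.Walk h₀ h₀)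
    (hhole : IsHole G c)
    (hshortest : ∀ (w : V) (d : G.Walk w w), IsHole G d → c.length ≤ d.length)
    (v₁ v₂ v₃ : V)
    (h12 : c.toSubgraph.Adj v₁ v₂) (h23 : c.toSubgraph.Adj v₂ v₃) (h13 : v₁ ≠ v₃)
    (g21 : G.Adj v₂ v₁) (g23 : G.Adj v₂ v₃)
    (hv1 : v₁ ∈ (((G.neighborSet v₂ ∪ {v₂}) \ {v₁, v₃} : Set V))ᶜ)
    (hv3 : v₃ ∈ (((G.neighborSet v₂ ∪ {v₂}) \ {v₁, v₃} : Set V))ᶜ) :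
    (∃ p : (G.induce (((G.neighborSet v₂ ∪ {v₂}) \ {v₁, v₃} : Set V))ᶜ).Walk
        ⟨v₁, hv1⟩ ⟨v₃, hv3⟩, p.IsPath ∧ p.length = c.length - 2) ∧
    (∀ p : (G.induce (((G.neighborSet v₂ ∪ {v₂}) \ {v₁, v₃} : Set V))ᶜ).Walk
        ⟨v₁, hv1⟩ ⟨v₃, hv3⟩, p.IsPath → c.length - 2 ≤ p.length) ∧
    (∀ p : (G.induce (((G.neighborSet v₂ ∪ {v₂}) \ {v₁, v₃} : Set V))ᶜ).Walk
        ⟨v₁, hv1⟩ ⟨v₃, hv3⟩, p.IsPath → p.length = c.length - 2 →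
      IsHole G (SimpleGraph.Walk.cons g21
        ((p.map (SimpleGraph.Embedding.induce
          (((G.neighborSet v₂ ∪ {v₂}) \ {v₁, v₃} : Set V))ᶜ).toHom).append
          (SimpleGraph.Walk.cons g23.symm SimpleGraph.Walk.nil))) ∧
      (SimpleGraph.Walk.cons g21
        ((p.map (SimpleGraph.Embedding.induce
          (((G.neighborSet v₂ ∪ {v₂}) \ {v₁, v₃} : Set V))ᶜ).toHom).append
          (SimpleGraph.Walk.cons g23.symm SimpleGraph.Walk.nil))).length = c.length) := by
  set S : Set V := ((G.neighborSet v₂ ∪ {v₂}) \ {v₁, v₃})ᶜ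
  have hv₂S : v₂ ∉ S := by simp [S, g21.ne, g23.ne]
  have hNS : ∀ x ∈ S, G.Adj v₂ x → x = v₁ ∨ x = v₃ := fun x hx hx₂ => by
    simpa [S, hx₂, or_iff_not_imp_left] using hx
  obtain ⟨r, hr, hrlen⟩ := hhole.exists_cons_concat h12 h23 h13 g21 g23.symm
  obtain ⟨hrpath, hrc, hr2, hv₂r, hrN⟩ := (isHole_cons_concat_iff _ _).mp hr
  have hrS : ∀ x ∈ r.support, x ∈ S := fun x hx => by
    simp only [S, Set.mem_compl_iff, Set.mem_sdiff, not_and, not_not]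
    rintro (hadj | rfl)
    exacts [by simpa using hrN x hx hadj, absurd hx hv₂r]
  have hclose := fun (p : (G.induce S).Walk ⟨v₁, hv1⟩ ⟨v₃, hv3⟩) =>
    isHole_cons_concat_map_induce (p := p) hv₂S hNS h13 (hrpath.not_adj_of_isChordless hrc hr2)
      hv1 hv3 g21 g23.symm
  set D := (G.induce S).dist ⟨v₁, hv1⟩ ⟨v₃, hv3⟩
  have hDle : D ≤ c.length - 2 :=
    calc D ≤ (r.induce S hrS).length := (G.induce S).dist_le _
      _ = r.length := (length_map _ _).symm.trans (congrArg length (r.map_induce hrS))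
      _ = c.length - 2 := by omega
  obtain ⟨p₀, hp₀⟩ := (r.induce S hrS).reachable.exists_walk_length_eq_dist
  obtain ⟨hhole₀, hlen₀⟩ := hclose p₀ hp₀
  have hDge : c.length ≤ p₀.length + 2 := (hshortest _ _ hhole₀).trans_eq hlen₀
  refine ⟨⟨p₀, p₀.isPath_of_length_eq_dist hp₀, by omega⟩, fun p _ => ?_, fun p _ hp => ?_⟩
  · have := (G.induce S).dist_le p
    omega
  · obtain ⟨hhole', hlen'⟩ := hclose p (by omega)
    exact ⟨hhole', hlen'.trans (by omega)⟩
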